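/- arXiv:1806.06344 — 3 statements merged into one kernel-verified Lean document; each statement's English description precedes it below -/
import Mathlib

section
/- If u ∈ D(A), i.e. u ∈ V with ρu_x ∈ H¹(I), then (ρu_x)(x) → 0 as x → ±1. In particular, if ρu_x ∈ C⁰([-1,1]) and (ρu_x)(1) = L ≠ 0, then √ρ u_x ∉ L²(I). -/
/-!
Write `w(x) = ρ₀ (1 - x²)` and `g = w u'` on `(-1, 1)`, so that the weighted energy density is
`w u'² = g² / w`. If `g(c) ≠ 0` at an endpoint `c = ±1`, then by continuity `g²` stays bounded
below near `c`, while `w(x) ≤ 2 ρ₀ |x - c|` vanishes only linearly there; hence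
`g² / w ≳ |x - c|⁻¹`, which is not integrable at `c` because `log |x - c|` blows up.
-/

open MeasureTheory Set Filter Asymptotics Topology

theorem not_integrableOn_of_sub_inv_isBigO {E : Type*} [NormedAddCommGroup E] {f : ℝ → E}
    {k : Set ℝ} {c : ℝ} (l : Filter ℝ) [NeBot l] [TendstoIxxClass Icc l l]
    (hlc : l ≤ 𝓝[≠] c) (hk : k ∈ l) (hf : (fun x => (x - c)⁻¹) =O[l] f) :
    ¬IntegrableOn f k := by
  have hlog : ∀ᶠ x in l, HasDerivAt (fun x => Real.log (x - c)) (x - c)⁻¹ x := by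
    filter_upwards [hlc self_mem_nhdsWithin] with x hx
    simpa using ((hasDerivAt_id x).sub_const c).log (sub_ne_zero.2 hx)
  have hlog_infty : Tendsto (fun x => ‖Real.log (x - c)‖) l atTop := by
    refine tendsto_abs_atBot_atTop.comp (Real.tendsto_log_nhdsNE_zero.comp ?_)
    rw [← sub_self c]
    exact (((hasDerivAt_id c).sub_const c).tendsto_nhdsNE one_ne_zero).mono_left hlc
  exact not_integrableOn_of_tendsto_norm_atTop_of_deriv_isBigO_filter l hk
    (hlog.mono fun x hx => hx.differentiableAt) hlog_infty
    (hf.congr' (hlog.mono fun x hx => hx.deriv.symm) EventuallyEq.rfl)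

theorem sub_inv_isBigO_sq_div {l : Filter ℝ} {g w : ℝ → ℝ} {c y K : ℝ}
    (hg : Tendsto g l (𝓝 y)) (hy : y ≠ 0) (hw : ∀ᶠ x in l, 0 < w x ∧ w x ≤ K * |x - c|) :
    (fun x => (x - c)⁻¹) =O[l] fun x => g x ^ 2 / w x := by
  set m := (|y| / 2) ^ 2
  have hm : 0 < m := by positivity
  have hg_large : ∀ᶠ x in l, |y| / 2 < |g x| :=
    ((continuous_abs.tendsto y).comp hg).eventually_const_lt (half_lt_self (abs_pos.2 hy))
  refine IsBigO.of_bound (K / m) ?_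
  filter_upwards [hg_large, hw] with x hgx ⟨hw_pos, hw_le⟩
  have hxc : 0 < |x - c| := abs_pos.2 fun h => by simp [h] at hw_le; linarith
  have hK : 0 < K := pos_of_mul_pos_left (hw_pos.trans_le hw_le) hxc.le
  have hgm : m ≤ g x ^ 2 := by
    rw [← sq_abs (g x)]
    exact pow_le_pow_left₀ (by positivity) hgx.le 2
  rw [Real.norm_eq_abs, Real.norm_eq_abs, abs_inv, abs_div, abs_of_pos hw_pos, abs_sq]
  calc |x - c|⁻¹ ≤ K / w x := by
        rw [inv_eq_one_div, div_le_div_iff₀ hxc hw_pos]; linarith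
    _ = K / m * (m / w x) := by field_simp
    _ ≤ K / m * (g x ^ 2 / w x) := by gcongr

theorem one_sub_sq_le_two_mul_abs_sub {x c : ℝ} (hc : |c| = 1) (hx : |x| ≤ 1) :
    1 - x ^ 2 ≤ 2 * |x - c| := by
  have hfactor : 1 - x ^ 2 = (c - x) * (c + x) := by
    have hc2 : c ^ 2 = 1 := by rw [← sq_abs, hc, one_pow]
    linear_combination -hc2
  calc 1 - x ^ 2 ≤ |c - x| * |c + x| := hfactor ▸ (le_abs_self _).trans (abs_mul _ _).le
    _ ≤ |x - c| * 2 := by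
        rw [abs_sub_comm]
        gcongr
        exact (abs_add_le c x).trans (by linarith)
    _ = 2 * |x - c| := mul_comm _ _

theorem not_integrableOn_Ioo_of_endpoint_ne_zero {ρ₀ : ℝ} (hρ₀ : 0 < ρ₀) {u g : ℝ → ℝ}
    (hg : ContinuousOn g (Icc (-1 : ℝ) 1))
    (hgu : ∀ x ∈ Ioo (-1 : ℝ) 1, g x = ρ₀ * (1 - x ^ 2) * deriv u x)
    {c : ℝ} (hc : |c| = 1) (hgc : g c ≠ 0) :
    ¬IntegrableOn (fun x => ρ₀ * (1 - x ^ 2) * deriv u x ^ 2) (Ioo (-1 : ℝ) 1) := by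
  have hc_mem : c ∈ Icc (-1 : ℝ) 1 := abs_le.1 hc.le
  have : (𝓝[Ioo (-1 : ℝ) 1] c).NeBot := by
    rwa [← mem_closure_iff_nhdsWithin_neBot, closure_Ioo (by norm_num)]
  have hlc : 𝓝[Ioo (-1 : ℝ) 1] c ≤ 𝓝[≠] c :=
    nhdsWithin_mono _ fun x hx (hxc : x = c) => (abs_lt.2 hx).ne (hxc ▸ hc)
  have hweight : ∀ᶠ x in 𝓝[Ioo (-1 : ℝ) 1] c,
      0 < ρ₀ * (1 - x ^ 2) ∧ ρ₀ * (1 - x ^ 2) ≤ 2 * ρ₀ * |x - c| := by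
    filter_upwards [self_mem_nhdsWithin] with x hx
    have hx2 : x ^ 2 < 1 := sq_lt_one_iff_abs_lt_one x |>.2 (abs_lt.2 hx)
    refine ⟨mul_pos hρ₀ (by linarith), ?_⟩
    calc ρ₀ * (1 - x ^ 2) ≤ ρ₀ * (2 * |x - c|) :=
          mul_le_mul_of_nonneg_left (one_sub_sq_le_two_mul_abs_sub hc (abs_lt.2 hx).le) hρ₀.le
      _ = 2 * ρ₀ * |x - c| := by ring
  have hF : (fun x => ρ₀ * (1 - x ^ 2) * deriv u x ^ 2) =ᶠ[𝓝[Ioo (-1 : ℝ) 1] c]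
      fun x => g x ^ 2 / (ρ₀ * (1 - x ^ 2)) := by
    filter_upwards [self_mem_nhdsWithin] with x hx
    rw [hgu x hx]
    field_simp
  exact not_integrableOn_of_sub_inv_isBigO _ hlc self_mem_nhdsWithin
    ((sub_inv_isBigO_sq_div ((hg c hc_mem).mono_left (nhdsWithin_mono _ Ioo_subset_Icc_self))
      hgc hweight).congr' EventuallyEq.rfl hF.symm)

/-- If u ∈ D(A), i.e. u ∈ V with ρu_x ∈ H¹(I) (so ρu_x has a continuous
representative g on [-1,1]), then (ρu_x)(x) → 0 as x → ±1, i.e. g(±1) = 0.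
In particular if g(1) = L ≠ 0 then √ρ u_x ∉ L²(I). -/
theorem stmt_2 (ρ₀ : ℝ) (hρ₀ : 0 < ρ₀) (u g : ℝ → ℝ)
    (hg : ContinuousOn g (Icc (-1 : ℝ) 1))
    (hgu : ∀ x ∈ Ioo (-1 : ℝ) 1, g x = ρ₀ * (1 - x ^ 2) * deriv u x) :
    ((IntegrableOn (fun x => ρ₀ * (1 - x ^ 2) * (deriv u x) ^ 2)
        (Ioo (-1 : ℝ) 1)) → g 1 = 0 ∧ g (-1) = 0) ∧
    (∀ L : ℝ, L ≠ 0 → g 1 = L →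
      ¬ IntegrableOn (fun x => ρ₀ * (1 - x ^ 2) * (deriv u x) ^ 2)
        (Ioo (-1 : ℝ) 1)) := by
  have endpoint := fun c (hc : |c| = 1) =>
    not_integrableOn_Ioo_of_endpoint_ne_zero hρ₀ hg hgu hc
  refine ⟨fun hi => ⟨?_, ?_⟩, fun L hL hgL => endpoint 1 (by norm_num) (hgL ▸ hL)⟩
  · exact not_not.1 fun h => endpoint 1 (by norm_num) h hi
  · exact not_not.1 fun h => endpoint (-1) (by norm_num) h hi
end

section
/- (L^∞ a priori bound, one-sided version) Let u be a sufficiently regular solution of u_t - (ρ u_x)_x = Q β(u) - ε(u)|u|³u + F on (0,T)×I with ρ u_x = 0 at x = ±1 and initial datum u(0,·) bounded by M in L^∞, where M ≥ ((‖Q‖_∞‖β‖_∞ + ‖F‖_∞)/ε₁)^{1/4} and ε(s) ≥ ε₁ > 0, β ≥ 0 bounded, F bounded. Then t ↦ ‖(u(t) - M)⁺‖²_{L²(I)} is nonincreasing, and consequently u(t,x) ≤ M for all t ∈ [0,T] and a.e. x ∈ I. -/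
/-!
Maximum principle with a logarithmic barrier. Suppose `u (t₁, x₁) > M` and maximise
`u - κ V` over `[0, t₁] × (-1, 1)`, where `V x = -log (1 - x²)`. Since `V → ∞` at `±1`, the
maximum is attained at some `(s, z)` with `z` interior, and `s > 0` by the initial bound. There
`u_t ≥ 0` and `(ρ u_x)_x ≤ (ρ κ V')_x = 2 κ ρ₀`, whereas the equation and the pointwise inequality
force `u_t - (ρ u_x)_x ≤ -c < 0`; choosing `κ` small gives a contradiction. Hence `u ≤ M`, so
`(u - M)⁺` vanishes identically.
-/

open MeasureTheory Set Filter Topology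

section RealFunctions

variable {f : ℝ → ℝ} {a s z K : ℝ}

theorem deriv_nonneg_of_isMaxOn_Icc (has : a < s) (hmax : IsMaxOn f (Icc a s) s) :
    0 ≤ deriv f s := by
  by_cases hf : DifferentiableAt ℝ f s
  · have hcone : a - s ∈ posTangentConeAt (Icc a s) s :=
      sub_mem_posTangentConeAt_of_segment_subset (by rw [segment_symm, segment_eq_Icc has.le])
    have h := hmax.localize.hasFDerivWithinAt_nonpos
      hf.hasDerivAt.hasDerivWithinAt.hasFDerivWithinAt hcone
    rw [ContinuousLinearMap.toSpanSingleton_apply, smul_eq_mul] at h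
    exact nonneg_of_mul_nonpos_right h (sub_neg.2 has)
  · rw [deriv_zero_of_not_differentiableAt hf]

theorem HasDerivAt.eventually_lt_nhdsLT (h : HasDerivAt f K z) (hK : 0 < K) :
    ∀ᶠ ξ in 𝓝[<] z, f ξ < f z := by
  filter_upwards [(hasDerivAt_iff_tendsto_slope_left_right.1 h).1.eventually (lt_mem_nhds hK),
    self_mem_nhdsWithin] with ξ hslope hξ
  rw [slope_def_field] at hslope
  have := mul_neg_of_pos_of_neg hslope (sub_neg.2 hξ)
  rwa [div_mul_cancel₀ _ (sub_neg.2 hξ).ne, sub_neg] at this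

theorem HasDerivAt.eventually_gt_nhdsGT (h : HasDerivAt f K z) (hK : 0 < K) :
    ∀ᶠ ξ in 𝓝[>] z, f z < f ξ := by
  filter_upwards [(hasDerivAt_iff_tendsto_slope_left_right.1 h).2.eventually (lt_mem_nhds hK),
    self_mem_nhdsWithin] with ξ hslope hξ
  rw [slope_def_field] at hslope
  have := mul_pos hslope (sub_pos.2 hξ)
  rwa [div_mul_cancel₀ _ (sub_pos.2 hξ).ne', sub_pos] at this

theorem eventually_lt_nhdsLT_of_hasDerivAt_pos {f' : ℝ → ℝ} (hc : ContinuousAt f z)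
    (h : ∀ᶠ ξ in 𝓝[<] z, HasDerivAt f (f' ξ) ξ ∧ 0 < f' ξ) : ∀ᶠ ξ in 𝓝[<] z, f ξ < f z := by
  obtain ⟨l, hl, hsub⟩ := mem_nhdsLT_iff_exists_Ioo_subset.1 h
  have hmono : StrictMonoOn f (Ioc l z) := by
    refine strictMonoOn_of_hasDerivWithinAt_pos (f' := f') (convex_Ioc l z) ?_ ?_ ?_
    · intro ξ hξ
      rcases hξ.2.eq_or_lt with rfl | hξz
      · exact hc.continuousWithinAt
      · exact (hsub ⟨hξ.1, hξz⟩).1.continuousAt.continuousWithinAt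
    · rw [interior_Ioc]; exact fun ξ hξ => (hsub hξ).1.hasDerivWithinAt
    · rw [interior_Ioc]; exact fun ξ hξ => (hsub hξ).2
  filter_upwards [Ioo_mem_nhdsLT hl] with ξ hξ
  exact hmono (Ioo_subset_Ioc_self hξ) (right_mem_Ioc.2 hl) hξ.2

theorem eventually_lt_nhdsGT_of_hasDerivAt_neg {f' : ℝ → ℝ} (hc : ContinuousAt f z)
    (h : ∀ᶠ ξ in 𝓝[>] z, HasDerivAt f (f' ξ) ξ ∧ f' ξ < 0) : ∀ᶠ ξ in 𝓝[>] z, f ξ < f z := by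
  obtain ⟨r, hr, hsub⟩ := mem_nhdsGT_iff_exists_Ioo_subset.1 h
  have hanti : StrictAntiOn f (Ico z r) := by
    refine strictAntiOn_of_hasDerivWithinAt_neg (f' := f') (convex_Ico z r) ?_ ?_ ?_
    · intro ξ hξ
      rcases hξ.1.eq_or_lt with rfl | hzξ
      · exact hc.continuousWithinAt
      · exact (hsub ⟨hzξ, hξ.2⟩).1.continuousAt.continuousWithinAt
    · rw [interior_Ico]; exact fun ξ hξ => (hsub hξ).1.hasDerivWithinAt
    · rw [interior_Ico]; exact fun ξ hξ => (hsub hξ).2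
  filter_upwards [Ioo_mem_nhdsGT hr] with ξ hξ
  exact hanti (left_mem_Ico.2 hr) (Ioo_subset_Ico_self hξ) hξ.1

/- Since `deriv φ` is `0` wherever `φ` is not differentiable, no second derivative of `φ` is
available. Instead, on a suitable side of `z` the flux `ρ φ'` is nonzero, so `φ` is differentiable
there, and it overtakes `ρ V'`, so `V - φ` is strictly monotone towards `z`. -/
theorem deriv_flux_le_of_isLocalMax {ρ φ V V' : ℝ → ℝ} {W : ℝ} (hW : 0 ≤ W)
    (hρ : ∀ᶠ ξ in 𝓝 z, 0 < ρ ξ) (hφ : ContinuousAt φ z)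
    (hV : ∀ᶠ ξ in 𝓝 z, HasDerivAt V (V' ξ) ξ)
    (hρV : HasDerivAt (fun ξ => ρ ξ * V' ξ) W z)
    (hmax : IsLocalMax (fun ξ => φ ξ - V ξ) z) :
    deriv (fun ξ => ρ ξ * deriv φ ξ) z ≤ W := by
  set g : ℝ → ℝ := fun ξ => ρ ξ * deriv φ ξ
  set k : ℝ → ℝ := fun ξ => g ξ - ρ ξ * V' ξ
  by_contra! hWg
  have hg : HasDerivAt g (deriv g z) z :=
    (differentiableAt_of_deriv_ne_zero (by linarith)).hasDerivAt
  have hk : HasDerivAt k (deriv g z - W) z := hg.sub hρV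
  have hk_eq (ξ : ℝ) : k ξ = -(ρ ξ * (V' ξ - deriv φ ξ)) := by simp only [k, g]; ring
  have hψ (ξ : ℝ) (hgξ : g ξ ≠ 0) (hVξ : HasDerivAt V (V' ξ) ξ) :
      HasDerivAt (fun ξ => V ξ - φ ξ) (V' ξ - deriv φ ξ) ξ :=
    hVξ.sub (differentiableAt_of_deriv_ne_zero (right_ne_zero_of_mul hgξ)).hasDerivAt
  have hψz : ContinuousAt (fun ξ => V ξ - φ ξ) z := hV.self_of_nhds.continuousAt.sub hφ
  have hside : (g z ≤ 0 ∧ k z ≤ 0) ∨ (0 ≤ g z ∧ 0 ≤ k z) := by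
    by_cases hφz : DifferentiableAt ℝ φ z
    · have hkz : k z = 0 := by
        have hφV := hmax.hasDerivAt_eq_zero (hφz.hasDerivAt.sub hV.self_of_nhds)
        rw [hk_eq, sub_eq_zero.1 hφV, sub_self, mul_zero, neg_zero]
      rcases le_total (g z) 0 with h | h <;> simp [h, hkz]
    · have hgz : g z = 0 := by simp [g, deriv_zero_of_not_differentiableAt hφz]
      rcases le_total (k z) 0 with h | h <;> simp [h, hgz]
  rcases hside with ⟨hgz, hkz⟩ | ⟨hgz, hkz⟩
  · have hlt : ∀ᶠ ξ in 𝓝[<] z, V ξ - φ ξ < V z - φ z := by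
      refine eventually_lt_nhdsLT_of_hasDerivAt_pos (f' := fun ξ => V' ξ - deriv φ ξ) hψz ?_
      filter_upwards [hg.eventually_lt_nhdsLT (by linarith), hk.eventually_lt_nhdsLT (by linarith),
        nhdsWithin_le_nhds hρ, nhdsWithin_le_nhds hV] with ξ hgξ hkξ hρξ hVξ
      refine ⟨hψ ξ (by linarith) hVξ, pos_of_mul_pos_right (a := ρ ξ) ?_ hρξ.le⟩
      linarith [hk_eq ξ]
    obtain ⟨ξ, hξ, hmaxξ⟩ := (hlt.and (nhdsWithin_le_nhds hmax)).exists
    linarith [show φ ξ - V ξ ≤ φ z - V z from hmaxξ]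
  · have hlt : ∀ᶠ ξ in 𝓝[>] z, V ξ - φ ξ < V z - φ z := by
      refine eventually_lt_nhdsGT_of_hasDerivAt_neg (f' := fun ξ => V' ξ - deriv φ ξ) hψz ?_
      filter_upwards [hg.eventually_gt_nhdsGT (by linarith), hk.eventually_gt_nhdsGT (by linarith),
        nhdsWithin_le_nhds hρ, nhdsWithin_le_nhds hV] with ξ hgξ hkξ hρξ hVξ
      refine ⟨hψ ξ (by linarith) hVξ, neg_of_mul_neg_right (a := ρ ξ) ?_ hρξ.le⟩
      linarith [hk_eq ξ]
    obtain ⟨ξ, hξ, hmaxξ⟩ := (hlt.and (nhdsWithin_le_nhds hmax)).exists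
    linarith [show φ ξ - V ξ ≤ φ z - V z from hmaxξ]

end RealFunctions

lemma one_sub_sq_pos {ξ : ℝ} (hξ : ξ ∈ Ioo (-1 : ℝ) 1) : 0 < 1 - ξ ^ 2 := by
  nlinarith [hξ.1, hξ.2]

noncomputable def logBarrier (ξ : ℝ) : ℝ := -Real.log (1 - ξ ^ 2)

lemma hasDerivAt_logBarrier {ξ : ℝ} (hξ : ξ ∈ Ioo (-1 : ℝ) 1) :
    HasDerivAt logBarrier (2 * ξ / (1 - ξ ^ 2)) ξ := by
  have h := (((hasDerivAt_pow 2 ξ).const_sub 1).log (one_sub_sq_pos hξ).ne').neg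
  exact h.congr_deriv (by push_cast; ring)

lemma logBarrier_nonneg {ξ : ℝ} (hξ : ξ ∈ Icc (-1 : ℝ) 1) : 0 ≤ logBarrier ξ :=
  neg_nonneg.2 <| Real.log_nonpos (by nlinarith [hξ.1, hξ.2]) (by nlinarith)

lemma logBarrier_zero : logBarrier 0 = 0 := by
  simp [logBarrier]

lemma logBarrier_abs (ξ : ℝ) : logBarrier |ξ| = logBarrier ξ := by
  simp [logBarrier]

lemma tendsto_logBarrier_nhdsLT_one : Tendsto logBarrier (𝓝[<] 1) atTop := by
  have h : Tendsto (fun ξ : ℝ => 1 - ξ ^ 2) (𝓝[<] 1) (𝓝[>] 0) := by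
    refine tendsto_nhdsWithin_iff.2 ⟨?_, ?_⟩
    · have := ((by fun_prop : Continuous fun ξ : ℝ => 1 - ξ ^ 2).tendsto 1).mono_left
        (nhdsWithin_le_nhds (s := Iio 1))
      simpa using this
    · filter_upwards [Ioo_mem_nhdsLT (show (-1 : ℝ) < 1 by norm_num)] with ξ hξ
      exact one_sub_sq_pos hξ
  exact tendsto_neg_atBot_atTop.comp (Real.tendsto_log_nhdsGT_zero.comp h)

lemma hasDerivAt_flux_logBarrier (ρ₀ κ : ℝ) {z : ℝ} (hz : z ∈ Ioo (-1 : ℝ) 1) :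
    HasDerivAt (fun ξ => ρ₀ * (1 - ξ ^ 2) * (κ * (2 * ξ / (1 - ξ ^ 2)))) (2 * κ * ρ₀) z := by
  refine ((hasDerivAt_id z).const_mul (2 * κ * ρ₀)).congr_deriv (mul_one _)
    |>.congr_of_eventuallyEq ?_
  filter_upwards [Ioo_mem_nhds hz.1 hz.2] with ξ hξ
  have := (one_sub_sq_pos hξ).ne'
  simp only [id]
  field_simp

lemma exists_isMaxOn_sub_logBarrier {u : ℝ → ℝ → ℝ}
    (hu : Continuous (fun p : ℝ × ℝ => u p.1 p.2)) {t₁ κ : ℝ} (ht₁ : 0 ≤ t₁) (hκ : 0 < κ) :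
    ∃ p ∈ Icc 0 t₁ ×ˢ Ioo (-1 : ℝ) 1,
      IsMaxOn (fun p : ℝ × ℝ => u p.1 p.2 - κ * logBarrier p.2) (Icc 0 t₁ ×ˢ Ioo (-1) 1) p := by
  obtain ⟨B, hB⟩ := (isCompact_Icc.prod isCompact_Icc).bddAbove_image
    (f := fun p : ℝ × ℝ => u p.1 p.2) (K := Icc 0 t₁ ×ˢ Icc (-1 : ℝ) 1) hu.continuousOn
  -- close to `±1` the penalized function lies below its value at `(0, 0)`
  obtain ⟨l, hl, hfar⟩ := mem_nhdsLT_iff_exists_Ioo_subset.1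
    ((tendsto_logBarrier_nhdsLT_one.const_mul_atTop hκ).eventually_gt_atTop (B - u 0 0))
  obtain ⟨z₂, hz₂0, hz₂⟩ : ∃ z₂, 0 ≤ z₂ ∧ z₂ ∈ Ioo l 1 :=
    ⟨max 0 ((l + 1) / 2), le_max_left _ _, lt_max_of_lt_right (by linarith [mem_Iio.1 hl]),
      max_lt one_pos (by linarith [mem_Iio.1 hl])⟩
  have hsub : Icc (-z₂) z₂ ⊆ Ioo (-1) 1 := Icc_subset_Ioo (by linarith [hz₂.2]) hz₂.2
  have h00 : ((0 : ℝ), (0 : ℝ)) ∈ Icc 0 t₁ ×ˢ Icc (-z₂) z₂ :=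
    ⟨left_mem_Icc.2 ht₁, by linarith, hz₂0⟩
  obtain ⟨p, hpK, hp⟩ := (isCompact_Icc.prod isCompact_Icc).exists_isMaxOn
    (f := fun p : ℝ × ℝ => u p.1 p.2 - κ * logBarrier p.2) ⟨_, h00⟩
    (fun q hq => (hu.continuousAt.sub (continuousAt_const.mul
      ((hasDerivAt_logBarrier (hsub hq.2)).continuousAt.comp
        continuous_snd.continuousAt))).continuousWithinAt)
  refine ⟨p, ⟨hpK.1, hsub hpK.2⟩, fun q hq => ?_⟩
  by_cases hq₂ : |q.2| ≤ z₂
  · exact hp ⟨hq.1, abs_le.1 hq₂⟩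
  · have hVq : B - u 0 0 < κ * logBarrier q.2 :=
      logBarrier_abs q.2 ▸ hfar ⟨hz₂.1.trans (not_le.1 hq₂), abs_lt.2 hq.2⟩
    have huq : u q.1 q.2 ≤ B := hB ⟨q, ⟨hq.1, Ioo_subset_Icc_self hq.2⟩, rfl⟩
    have hp00 : u 0 0 - κ * logBarrier 0 ≤ u p.1 p.2 - κ * logBarrier p.2 := hp h00
    rw [logBarrier_zero, mul_zero, sub_zero] at hp00
    show u q.1 q.2 - κ * logBarrier q.2 ≤ u p.1 p.2 - κ * logBarrier p.2
    linarith

noncomputable def degenerateHeatOp (ρ₀ : ℝ) (u : ℝ → ℝ → ℝ) (t x : ℝ) : ℝ :=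
  deriv (fun s => u s x) t - deriv (fun y => ρ₀ * (1 - y ^ 2) * deriv (u t) y) x

lemma neg_le_degenerateHeatOp_of_isMax {ρ₀ κ s z : ℝ} {u : ℝ → ℝ → ℝ} (hρ₀ : 0 < ρ₀)
    (hκ : 0 ≤ κ) (hs : 0 < s) (hz : z ∈ Ioo (-1 : ℝ) 1) (hu : ContinuousAt (u s) z)
    (htime : IsMaxOn (fun τ => u τ z) (Icc 0 s) s)
    (hspace : IsLocalMax (fun ξ => u s ξ - κ * logBarrier ξ) z) :
    -(2 * κ * ρ₀) ≤ degenerateHeatOp ρ₀ u s z := by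
  have hρ : ∀ᶠ ξ in 𝓝 z, 0 < ρ₀ * (1 - ξ ^ 2) := by
    filter_upwards [Ioo_mem_nhds hz.1 hz.2] with ξ hξ
    exact mul_pos hρ₀ (one_sub_sq_pos hξ)
  have hV : ∀ᶠ ξ in 𝓝 z, HasDerivAt (fun ξ => κ * logBarrier ξ) (κ * (2 * ξ / (1 - ξ ^ 2))) ξ := by
    filter_upwards [Ioo_mem_nhds hz.1 hz.2] with ξ hξ
    exact (hasDerivAt_logBarrier hξ).const_mul κ
  have hflux := deriv_flux_le_of_isLocalMax (by positivity) hρ hu hV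
    (hasDerivAt_flux_logBarrier ρ₀ κ hz) hspace
  have hdt := deriv_nonneg_of_isMaxOn_Icc hs htime
  unfold degenerateHeatOp
  linarith

theorem le_of_degenerateHeatOp_le_neg {ρ₀ T M : ℝ} {u : ℝ → ℝ → ℝ} (hρ₀ : 0 < ρ₀)
    (hu : Continuous (fun p : ℝ × ℝ => u p.1 p.2)) (hinit : ∀ x ∈ Ioo (-1 : ℝ) 1, u 0 x ≤ M)
    (hL : ∀ b > 0, ∃ c > 0, ∀ t ∈ Ioo 0 T, ∀ x ∈ Ioo (-1 : ℝ) 1,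
      M + b ≤ u t x → degenerateHeatOp ρ₀ u t x ≤ -c) :
    ∀ t ∈ Ioo 0 T, ∀ x ∈ Ioo (-1 : ℝ) 1, u t x ≤ M := by
  intro t₁ ht₁ x₁ hx₁
  by_contra! hgt
  set b := (u t₁ x₁ - M) / 2 with hb
  obtain ⟨c, hc, hLc⟩ := hL b (by linarith)
  have hsmall : ∀ᶠ κ in 𝓝 (0 : ℝ), 2 * κ * ρ₀ < c ∧ κ * logBarrier x₁ < b :=
    ((by fun_prop : Continuous fun κ : ℝ => 2 * κ * ρ₀).continuousAt.eventually_lt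
      continuousAt_const (by simpa using hc)).and
    ((by fun_prop : Continuous fun κ : ℝ => κ * logBarrier x₁).continuousAt.eventually_lt
      continuousAt_const (by rw [zero_mul]; linarith))
  obtain ⟨κ, ⟨hκc, hκx⟩, hκ⟩ := ((hsmall.filter_mono nhdsWithin_le_nhds).and
    self_mem_nhdsWithin : ∀ᶠ κ in 𝓝[>] (0 : ℝ), _ ∧ κ ∈ Ioi 0).exists
  obtain ⟨⟨s, z⟩, ⟨hs, hz⟩, hmax⟩ := exists_isMaxOn_sub_logBarrier hu ht₁.1.le hκ
  have hval : u t₁ x₁ - κ * logBarrier x₁ ≤ u s z - κ * logBarrier z :=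
    isMaxOn_iff.1 hmax (t₁, x₁) ⟨⟨ht₁.1.le, le_rfl⟩, hx₁⟩
  have hsz : M + b ≤ u s z := by
    have := mul_nonneg hκ.le (logBarrier_nonneg (Ioo_subset_Icc_self hz))
    linarith
  have hs₀ : 0 < s := hs.1.lt_of_ne (by rintro rfl; linarith [hinit z hz])
  have htime : IsMaxOn (fun τ => u τ z) (Icc 0 s) s := fun τ hτ => by
    have : u τ z - κ * logBarrier z ≤ u s z - κ * logBarrier z :=
      isMaxOn_iff.1 hmax (τ, z) ⟨⟨hτ.1, hτ.2.trans hs.2⟩, hz⟩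
    exact sub_le_sub_iff_right _ |>.1 this
  have hspace : IsLocalMax (fun ξ => u s ξ - κ * logBarrier ξ) z :=
    IsMaxOn.isLocalMax (s := Ioo (-1) 1) (fun ξ hξ => isMaxOn_iff.1 hmax (s, ξ) ⟨hs, hξ⟩)
      (Ioo_mem_nhds hz.1 hz.2)
  have hop := neg_le_degenerateHeatOp_of_isMax hρ₀ hκ.le hs₀ hz
    (hu.comp (Continuous.prodMk_right s)).continuousAt htime hspace
  linarith [hLc s ⟨hs₀, hs.2.trans_lt ht₁.2⟩ z hz hsz]

lemma reaction_le {q b e f y m MQ Mβ MF ε₁ M : ℝ} (hq : |q| ≤ MQ) (hb₀ : 0 ≤ b) (hb : b ≤ Mβ)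
    (hf : |f| ≤ MF) (he : ε₁ ≤ e) (hε₁ : 0 ≤ ε₁) (hM : MQ * Mβ + MF ≤ ε₁ * M ^ 4)
    (hm : 0 ≤ m) (hmy : m ≤ y) :
    q * b - e * |y| ^ 3 * y + f ≤ -(ε₁ * (m ^ 4 - M ^ 4)) := by
  have hqb : q * b ≤ MQ * Mβ :=
    calc q * b ≤ MQ * b := mul_le_mul_of_nonneg_right ((le_abs_self q).trans hq) hb₀
      _ ≤ MQ * Mβ := mul_le_mul_of_nonneg_left hb ((abs_nonneg q).trans hq)
  have hy4 : ε₁ * m ^ 4 ≤ e * |y| ^ 3 * y := by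
    rw [abs_of_nonneg (hm.trans hmy), mul_assoc, ← pow_succ]
    exact mul_le_mul he (pow_le_pow_left₀ hm hmy 4) (by positivity) (hε₁.trans he)
  linarith [(le_abs_self f).trans hf]

lemma le_mul_pow_four_of_rpow_le {x ε M : ℝ} (hx : 0 ≤ x) (hε : 0 < ε)
    (h : (x / ε) ^ ((1 : ℝ) / 4) ≤ M) : x ≤ ε * M ^ 4 := by
  have hM : 0 ≤ M := (Real.rpow_nonneg (by positivity) _).trans h
  rw [one_div, Real.rpow_inv_le_iff_of_pos (by positivity) hM (by norm_num), div_le_iff₀ hε] at h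
  norm_cast at h
  linarith

theorem stmt_12_general (ρ₀ T M MQ Mβ MF ε₁ : ℝ)
    (hρ₀ : 0 < ρ₀) (hT : 0 < T) (hε₁ : 0 < ε₁)
    (u : ℝ → ℝ → ℝ) (Q F : ℝ → ℝ → ℝ) (β ε : ℝ → ℝ)
    (hreg : Continuous (fun p : ℝ × ℝ => u p.1 p.2))
    (hQ : ∀ t x, |Q t x| ≤ MQ)
    (hβpos : ∀ y, 0 ≤ β y) (hβb : ∀ y, β y ≤ Mβ)
    (hF : ∀ t x, |F t x| ≤ MF)
    (hεlow : ∀ y, ε₁ ≤ ε y)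
    (hM : ((MQ * Mβ + MF) / ε₁) ^ ((1 : ℝ) / 4) ≤ M)
    -- the equation:
    (heq : ∀ t ∈ Ioo (0 : ℝ) T, ∀ x ∈ Ioo (-1 : ℝ) 1,
      deriv (fun s => u s x) t
          - deriv (fun y => ρ₀ * (1 - y ^ 2) * deriv (u t) y) x
        = Q t x * β (u t x) - ε (u t x) * |u t x| ^ 3 * u t x + F t x)
    -- initial datum bounded by M:
    (hinit : ∀ x ∈ Ioo (-1 : ℝ) 1, u 0 x ≤ M) :
    AntitoneOn (fun t => ∫ x in Ioo (-1 : ℝ) 1, (max (u t x - M) 0) ^ 2)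
        (Icc (0 : ℝ) T) ∧
    ∀ t ∈ Icc (0 : ℝ) T,
      ∀ᵐ x ∂(MeasureTheory.volume.restrict (Ioo (-1 : ℝ) 1)), u t x ≤ M := by
  have hbase : 0 ≤ MQ * Mβ + MF := by
    have := (abs_nonneg _).trans (hQ 0 0)
    have := (hβpos 0).trans (hβb 0)
    have := (abs_nonneg _).trans (hF 0 0)
    positivity
  have hM₀ : 0 ≤ M := (Real.rpow_nonneg (div_nonneg hbase hε₁.le) _).trans hM
  have hM₄ := le_mul_pow_four_of_rpow_le hbase hε₁ hM
  have hopen : ∀ t ∈ Ioo 0 T, ∀ x ∈ Ioo (-1 : ℝ) 1, u t x ≤ M := by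
    refine le_of_degenerateHeatOp_le_neg hρ₀ hreg hinit fun b hb => ⟨ε₁ * ((M + b) ^ 4 - M ^ 4),
      mul_pos hε₁ (sub_pos.2 (pow_lt_pow_left₀ (by linarith) hM₀ (by norm_num))),
      fun t ht x hx hbu => (heq t ht x hx).trans_le ?_⟩
    exact reaction_le (hQ t x) (hβpos _) (hβb _) (hF t x) (hεlow _) hε₁.le hM₄ (by linarith) hbu
  have hclosed : ∀ t ∈ Icc 0 T, ∀ x ∈ Ioo (-1 : ℝ) 1, u t x ≤ M := by
    intro t ht x hx
    rw [← closure_Ioo hT.ne] at ht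
    exact closure_minimal (fun τ hτ => hopen τ hτ x hx)
      (isClosed_le (hreg.comp (Continuous.prodMk_left x)) continuous_const) ht
  have hzero : ∀ t ∈ Icc 0 T, ∫ x in Ioo (-1 : ℝ) 1, (max (u t x - M) 0) ^ 2 = 0 := by
    intro t ht
    refine setIntegral_eq_zero_of_forall_eq_zero fun x hx => ?_
    rw [max_eq_right (sub_nonpos.2 (hclosed t ht x hx))]
    norm_num
  refine ⟨fun t₁ h₁ t₂ h₂ _ => (hzero t₂ h₂).trans (hzero t₁ h₁).symm |>.le, fun t ht => ?_⟩
  exact (ae_restrict_iff' measurableSet_Ioo).2 (Eventually.of_forall (hclosed t ht))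

/-- L^∞ a priori bound (one-sided): for a regular solution u of
u_t - (ρ u_x)_x = Q β(u) - ε(u)|u|³u + F on (0,T)×(-1,1) with degenerate
Neumann boundary conditions and u(0,·) ≤ M, where
M ≥ ((‖Q‖_∞‖β‖_∞ + ‖F‖_∞)/ε₁)^{1/4} and ε ≥ ε₁ > 0, β ≥ 0 bounded,
F bounded, the function t ↦ ‖(u(t)-M)⁺‖²_{L²} is nonincreasing and
u(t,x) ≤ M for all t ∈ [0,T] and a.e. x. -/
theorem stmt_12 (ρ₀ T M MQ Mβ MF ε₁ : ℝ)
    (hρ₀ : 0 < ρ₀) (hT : 0 < T) (hε₁ : 0 < ε₁)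
    (u : ℝ → ℝ → ℝ) (Q F : ℝ → ℝ → ℝ) (β ε : ℝ → ℝ)
    (hreg : Continuous (fun p : ℝ × ℝ => u p.1 p.2))
    (hQ : ∀ t x, |Q t x| ≤ MQ)
    (hβpos : ∀ y, 0 ≤ β y) (hβb : ∀ y, β y ≤ Mβ)
    (hF : ∀ t x, |F t x| ≤ MF)
    (hεlow : ∀ y, ε₁ ≤ ε y)
    (hM : ((MQ * Mβ + MF) / ε₁) ^ ((1 : ℝ) / 4) ≤ M)
    -- the equation:
    (heq : ∀ t ∈ Ioo (0 : ℝ) T, ∀ x ∈ Ioo (-1 : ℝ) 1,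
      deriv (fun s => u s x) t
          - deriv (fun y => ρ₀ * (1 - y ^ 2) * deriv (u t) y) x
        = Q t x * β (u t x) - ε (u t x) * |u t x| ^ 3 * u t x + F t x)
    -- degenerate Neumann boundary condition ρ u_x = 0 at x = ±1:
    (hbc : ∀ t ∈ Ioo (0 : ℝ) T,
      Filter.Tendsto (fun y => ρ₀ * (1 - y ^ 2) * deriv (u t) y)
        (nhdsWithin 1 (Iio 1)) (nhds 0) ∧
      Filter.Tendsto (fun y => ρ₀ * (1 - y ^ 2) * deriv (u t) y)
        (nhdsWithin (-1) (Ioi (-1))) (nhds 0))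
    -- initial datum bounded by M:
    (hinit : ∀ x ∈ Ioo (-1 : ℝ) 1, u 0 x ≤ M) :
    AntitoneOn (fun t => ∫ x in Ioo (-1 : ℝ) 1, (max (u t x - M) 0) ^ 2)
        (Icc (0 : ℝ) T) ∧
    ∀ t ∈ Icc (0 : ℝ) T,
      ∀ᵐ x ∂(MeasureTheory.volume.restrict (Ioo (-1 : ℝ) 1)), u t x ≤ M :=
  stmt_12_general ρ₀ T M MQ Mβ MF ε₁ hρ₀ hT hε₁ u Q F β ε hreg hQ hβpos hβb hF hεlow hM heq hinit
end

section
/- Let (βⱼ) be a sequence of nondecreasing C¹ functions with βⱼ(u) = a_i for u ≤ ū - 1/j, βⱼ(u) = a_f for u ≥ ū + 1/j, and a_i ≤ βⱼ ≤ a_f. If uⱼ → u a.e. on a measure space and βⱼ(uⱼ) ⇀ 𝓑 weakly in L², then a_i ≤ 𝓑 ≤ a_f a.e., 𝓑 = a_i a.e. on {u < ū}, and 𝓑 = a_f a.e. on {u > ū}. In other words, 𝓑(t,x) ∈ β(u(t,x)) a.e., where β is the Budyko set-valued graph. -/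
open MeasureTheory Set Filter Topology

/-!
Testing the weak convergence against indicators gives `∫ₛ βⱼ(uⱼ) → ∫ₛ 𝓑` for every measurable
`s`, so the pointwise bounds `a_i ≤ βⱼ(uⱼ) ≤ a_f` pass to `𝓑`. Where `u < ū`, the values `uⱼ`
eventually stay below `ū - 1/j`, so `βⱼ(uⱼ) = a_i` for large `j`; by dominated convergence the set
integrals over subsets of `{u < ū}` then converge to those of `a_i`, which forces `𝓑 = a_i` a.e.
there. The case `u > ū` is symmetric.
-/

section WeakLimit

variable {Ω : Type*} [MeasurableSpace Ω] {μ : Measure Ω}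
  {f : ℕ → Ω → ℝ} {B : Ω → ℝ}

theorem tendsto_setIntegral_of_tendsto_integral_mul [IsFiniteMeasure μ]
    (hweak : ∀ ψ : Ω → ℝ, MemLp ψ 2 μ →
      Tendsto (fun j => ∫ ω, f j ω * ψ ω ∂μ) atTop (𝓝 (∫ ω, B ω * ψ ω ∂μ)))
    {s : Set Ω} (hs : MeasurableSet s) :
    Tendsto (fun j => ∫ ω in s, f j ω ∂μ) atTop (𝓝 (∫ ω in s, B ω ∂μ)) := by
  have h := hweak (s.indicator 1) ((memLp_const 1).indicator hs)
  simp only [← indicator_mul_right, Pi.one_apply, mul_one, integral_indicator hs] at h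
  exact h

variable (hlim : ∀ s, MeasurableSet s →
  Tendsto (fun j => ∫ ω in s, f j ω ∂μ) atTop (𝓝 (∫ ω in s, B ω ∂μ)))
include hlim

theorem ae_le_of_tendsto_setIntegral {g : Ω → ℝ} (hg : Integrable g μ)
    (hf : ∀ j, Integrable (f j) μ) (hB : Integrable B μ) (hgf : ∀ j, g ≤ᵐ[μ] f j) :
    g ≤ᵐ[μ] B :=
  ae_le_of_forall_setIntegral_le hg hB fun s hs _ =>
    ge_of_tendsto' (hlim s hs) fun j =>
      setIntegral_mono_ae hg.integrableOn (hf j).integrableOn (hgf j)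

theorem ae_ge_of_tendsto_setIntegral {g : Ω → ℝ} (hg : Integrable g μ)
    (hf : ∀ j, Integrable (f j) μ) (hB : Integrable B μ) (hfg : ∀ j, f j ≤ᵐ[μ] g) :
    B ≤ᵐ[μ] g :=
  ae_le_of_forall_setIntegral_le hB hg fun s hs _ =>
    le_of_tendsto' (hlim s hs) fun j =>
      setIntegral_mono_ae (hf j).integrableOn hg.integrableOn (hfg j)

theorem ae_eq_of_tendsto_setIntegral_of_tendsto_ae [IsFiniteMeasure μ] {g : Ω → ℝ} {C : ℝ}
    (hf : ∀ j, AEStronglyMeasurable (f j) μ) (hbound : ∀ j, ∀ᵐ ω ∂μ, ‖f j ω‖ ≤ C)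
    (hB : Integrable B μ) (hfg : ∀ᵐ ω ∂μ, Tendsto (fun j => f j ω) atTop (𝓝 (g ω))) :
    B =ᵐ[μ] g := by
  have hg : Integrable g μ := by
    refine (integrable_const C).mono' (aestronglyMeasurable_of_tendsto_ae _ hf hfg) ?_
    filter_upwards [hfg, ae_all_iff.2 hbound] with ω hω hωC
    exact le_of_tendsto' hω.norm hωC
  refine hB.ae_eq_of_forall_setIntegral_eq _ _ hg fun s hs _ =>
    tendsto_nhds_unique (hlim s hs) ?_
  exact tendsto_integral_of_dominated_convergence (fun _ => C) (fun j => (hf j).restrict)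
    (integrable_const C).integrableOn (fun j => ae_restrict_of_ae (hbound j))
    (ae_restrict_of_ae hfg)

theorem ae_eq_on_of_tendsto_setIntegral_of_tendsto_ae [IsFiniteMeasure μ] {S : Set Ω}
    (hS : MeasurableSet S) {g : Ω → ℝ} {C : ℝ}
    (hf : ∀ j, AEStronglyMeasurable (f j) μ) (hbound : ∀ j, ∀ᵐ ω ∂μ, ‖f j ω‖ ≤ C)
    (hB : Integrable B μ)
    (hfg : ∀ᵐ ω ∂μ, ω ∈ S → Tendsto (fun j => f j ω) atTop (𝓝 (g ω))) :
    ∀ᵐ ω ∂μ, ω ∈ S → B ω = g ω := by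
  have hlimS : ∀ s, MeasurableSet s → Tendsto (fun j => ∫ ω in s, f j ω ∂μ.restrict S) atTop
      (𝓝 (∫ ω in s, B ω ∂μ.restrict S)) := fun s hs => by
    simpa only [Measure.restrict_restrict hs] using hlim (s ∩ S) (hs.inter hS)
  rw [← ae_restrict_iff' hS] at hfg ⊢
  exact ae_eq_of_tendsto_setIntegral_of_tendsto_ae hlimS (fun j => (hf j).restrict)
    (fun j => ae_restrict_of_ae (hbound j)) hB.restrict hfg

end WeakLimit

section Regularization

variable {β : ℕ → ℝ → ℝ} {a c y₀ : ℝ} {y : ℕ → ℝ}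

theorem tendsto_apply_of_eq_below (hβ : ∀ (j : ℕ) z, z ≤ c - 1 / (j + 1 : ℝ) → β j z = a)
    (hy : Tendsto y atTop (𝓝 y₀)) (hy₀ : y₀ < c) :
    Tendsto (fun j => β j (y j)) atTop (𝓝 a) := by
  have hδ : 0 < (c - y₀) / 2 := by linarith
  refine tendsto_const_nhds.congr' ?_
  filter_upwards [hy.eventually_lt_const (show y₀ < c - (c - y₀) / 2 by linarith),
    tendsto_one_div_add_atTop_nhds_zero_nat.eventually_lt_const hδ] with j hyj hj
  exact (hβ j _ (by linarith)).symm

theorem tendsto_apply_of_eq_above (hβ : ∀ (j : ℕ) z, c + 1 / (j + 1 : ℝ) ≤ z → β j z = a)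
    (hy : Tendsto y atTop (𝓝 y₀)) (hy₀ : c < y₀) :
    Tendsto (fun j => β j (y j)) atTop (𝓝 a) := by
  have hδ : 0 < (y₀ - c) / 2 := by linarith
  refine tendsto_const_nhds.congr' ?_
  filter_upwards [hy.eventually_const_lt (show c + (y₀ - c) / 2 < y₀ by linarith),
    tendsto_one_div_add_atTop_nhds_zero_nat.eventually_lt_const hδ] with j hyj hj
  exact (hβ j _ (by linarith)).symm

end Regularization

theorem stmt_16_general {Ω : Type*} [MeasurableSpace Ω] (μ : Measure Ω)
    [IsFiniteMeasure μ]
    (ai af ubar : ℝ)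
    (βseq : ℕ → ℝ → ℝ)
    (hβmono : ∀ j : ℕ, Monotone (βseq j))
    (hβlow : ∀ (j : ℕ) (y : ℝ), y ≤ ubar - 1 / (j + 1 : ℝ) → βseq j y = ai)
    (hβhigh : ∀ (j : ℕ) (y : ℝ), ubar + 1 / (j + 1 : ℝ) ≤ y → βseq j y = af)
    (hβrange : ∀ (j : ℕ) (y : ℝ), ai ≤ βseq j y ∧ βseq j y ≤ af)
    (useq : ℕ → Ω → ℝ) (u B : Ω → ℝ)
    (humeas : ∀ j, Measurable (useq j)) (humeas' : Measurable u)
    (hBmem : MemLp B 2 μ)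
    (hae : ∀ᵐ ω ∂μ, Tendsto (fun j => useq j ω) atTop (nhds (u ω)))
    -- weak convergence βⱼ(uⱼ) ⇀ 𝓑 in L²(μ):
    (hweak : ∀ ψ : Ω → ℝ, MemLp ψ 2 μ →
      Tendsto (fun j => ∫ ω, βseq j (useq j ω) * ψ ω ∂μ) atTop
        (nhds (∫ ω, B ω * ψ ω ∂μ))) :
    (∀ᵐ ω ∂μ, ai ≤ B ω ∧ B ω ≤ af) ∧
    (∀ᵐ ω ∂μ, u ω < ubar → B ω = ai) ∧
    (∀ᵐ ω ∂μ, ubar < u ω → B ω = af) := by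
  set f : ℕ → Ω → ℝ := fun j ω => βseq j (useq j ω)
  have hlim : ∀ s, MeasurableSet s → _ :=
    fun _ hs => tendsto_setIntegral_of_tendsto_integral_mul hweak hs
  have hf : ∀ j, AEStronglyMeasurable (f j) μ :=
    fun j => ((hβmono j).measurable.comp (humeas j)).aestronglyMeasurable
  have hbound : ∀ j, ∀ᵐ ω ∂μ, ‖f j ω‖ ≤ max |ai| |af| := fun j =>
    ae_of_all _ fun ω => abs_le_max_abs_abs (hβrange j _).1 (hβrange j _).2
  have hfint : ∀ j, Integrable (f j) μ :=
    fun j => (integrable_const _).mono' (hf j) (hbound j)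
  have hB := hBmem.integrable one_le_two
  refine ⟨?_, ?_, ?_⟩
  · filter_upwards [ae_le_of_tendsto_setIntegral hlim (integrable_const ai) hfint hB
        fun j => ae_of_all _ fun ω => (hβrange j _).1,
      ae_ge_of_tendsto_setIntegral hlim (integrable_const af) hfint hB
        fun j => ae_of_all _ fun ω => (hβrange j _).2] with ω hlow hhigh
    exact ⟨hlow, hhigh⟩
  · refine ae_eq_on_of_tendsto_setIntegral_of_tendsto_ae hlim
      (measurableSet_lt humeas' measurable_const) hf hbound hB ?_
    filter_upwards [hae] with ω hω hlt using tendsto_apply_of_eq_below hβlow hω hlt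
  · refine ae_eq_on_of_tendsto_setIntegral_of_tendsto_ae hlim
      (measurableSet_lt measurable_const humeas') hf hbound hB ?_
    filter_upwards [hae] with ω hω hlt using tendsto_apply_of_eq_above hβhigh hω hlt

/-- Identification of the weak limit of regularized Budyko coalbedos:
if βⱼ are nondecreasing C¹ regularizations of the Budyko graph
(βⱼ = a_i below ū - 1/j, = a_f above ū + 1/j, values in [a_i, a_f]),
uⱼ → u a.e. and βⱼ(uⱼ) ⇀ 𝓑 weakly in L²(μ), then a_i ≤ 𝓑 ≤ a_f a.e.,
𝓑 = a_i a.e. on {u < ū} and 𝓑 = a_f a.e. on {u > ū}; i.e. 𝓑 ∈ β(u) a.e. -/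
theorem stmt_16 {Ω : Type*} [MeasurableSpace Ω] (μ : Measure Ω)
    [IsFiniteMeasure μ]
    (ai af ubar : ℝ) (hai : ai < af)
    (βseq : ℕ → ℝ → ℝ)
    (hβC1 : ∀ j : ℕ, ContDiff ℝ 1 (βseq j))
    (hβmono : ∀ j : ℕ, Monotone (βseq j))
    (hβlow : ∀ (j : ℕ) (y : ℝ), y ≤ ubar - 1 / (j + 1 : ℝ) → βseq j y = ai)
    (hβhigh : ∀ (j : ℕ) (y : ℝ), ubar + 1 / (j + 1 : ℝ) ≤ y → βseq j y = af)
    (hβrange : ∀ (j : ℕ) (y : ℝ), ai ≤ βseq j y ∧ βseq j y ≤ af)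
    (useq : ℕ → Ω → ℝ) (u B : Ω → ℝ)
    (humeas : ∀ j, Measurable (useq j)) (humeas' : Measurable u)
    (hBmem : MemLp B 2 μ)
    (hae : ∀ᵐ ω ∂μ, Tendsto (fun j => useq j ω) atTop (nhds (u ω)))
    -- weak convergence βⱼ(uⱼ) ⇀ 𝓑 in L²(μ):
    (hweak : ∀ ψ : Ω → ℝ, MemLp ψ 2 μ →
      Tendsto (fun j => ∫ ω, βseq j (useq j ω) * ψ ω ∂μ) atTop
        (nhds (∫ ω, B ω * ψ ω ∂μ))) :
    (∀ᵐ ω ∂μ, ai ≤ B ω ∧ B ω ≤ af) ∧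
    (∀ᵐ ω ∂μ, u ω < ubar → B ω = ai) ∧
    (∀ᵐ ω ∂μ, ubar < u ω → B ω = af) :=
  stmt_16_general μ ai af ubar βseq hβmono hβlow hβhigh hβrange useq u B humeas humeas' hBmem hae
    hweak
end
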